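/- Let B(t) be a formal matrix-valued power series (B ∈ ℂ[[t¹,…,t^N]] ⊗ End(V₁), dim V₁ = N) solving the commutativity equations [∂B/∂t^i, ∂B/∂t^j] = 0 for all i,j, and suppose h ∈ V₁ is a primitive vector, i.e. the vectors (∂B/∂t^k)|_{t=0} · h, k = 1,…,N, form a basis of V₁. Then, after changing the basis of the source so that (∂B/∂t^k)(t) · h has constant components δ^i_k (equivalently B(t)h = t + const componentwise), the 2-form identity dB ∧ d(Bh) = 0 holds, and consequently ∂B^i_μ/∂t^ν = ∂B^i_ν/∂t^μ for all i, μ, ν; hence there exist formal power series F^i ∈ ℂ[[t]] with B^i_j = ∂F^i/∂t^j. -/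

import Mathlib

/-!
Since `∂ₖB · h = eₖ`, applying `∂_νB ∂_μB = ∂_μB ∂_νB` to `h` gives `∂_νB eμ = ∂_μB eν`: the
`μ`-th column of `∂_νB` is the `ν`-th column of `∂_μB`. So each row `(B^i_1, …, B^i_N)` is a
closed holomorphic 1-form on the convex set `ℂᴺ`, and the Poincaré lemma provides a potential `Fⁱ`.
-/

noncomputable section

/-- Partial derivative `∂f/∂tᵏ` of a scalar function of `N` complex variables. -/
def pd {N : ℕ} (f : (Fin N → ℂ) → ℂ) (k : Fin N) : (Fin N → ℂ) → ℂ :=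
  fun u => fderiv ℂ f u (Pi.single k 1)

/-- Entrywise partial derivative of a matrix-valued function. -/
def pdM {N : ℕ} (B : (Fin N → ℂ) → Matrix (Fin N) (Fin N) ℂ) (i : Fin N)
    (u : Fin N → ℂ) : Matrix (Fin N) (Fin N) ℂ :=
  Matrix.of fun j k => pd (fun v => B v j k) i u

open scoped Matrix

theorem Matrix.apply_eq_of_commute_of_mulVec_eq_single {n R : Type*} [Fintype n] [DecidableEq n]
    [Semiring R] {A : n → Matrix n n R} {h : n → R} (hA : ∀ k, A k *ᵥ h = Pi.single k 1)
    {μ ν : n} (hcomm : Commute (A μ) (A ν)) (i : n) : A ν i μ = A μ i ν := by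
  have hcol : ∀ k l, (A l * A k) *ᵥ h = (A l).col k := fun k l => by
    rw [← mulVec_mulVec, hA, mulVec_single_one]
  simpa [hcol] using congrFun (congrArg (· *ᵥ h) hcomm.eq.symm) i

theorem pd_sum_mul_const {N : ℕ} {ι : Type*} {s : Finset ι} {g : ι → (Fin N → ℂ) → ℂ}
    (hg : ∀ μ ∈ s, Differentiable ℂ (g μ)) (c : ι → ℂ) (k : Fin N) (u : Fin N → ℂ) :
    pd (fun v => ∑ μ ∈ s, g μ v * c μ) k u = ∑ μ ∈ s, pd (g μ) k u * c μ := by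
  have hsum : HasFDerivAt (fun v => ∑ μ ∈ s, g μ v * c μ)
      (∑ μ ∈ s, c μ • fderiv ℂ (g μ) u) u :=
    HasFDerivAt.fun_sum fun μ hμ => (hg μ hμ u).hasFDerivAt.mul_const (c μ)
  simp [pd, hsum.fderiv, mul_comm]

theorem pdM_mulVec {N : ℕ} {B : (Fin N → ℂ) → Matrix (Fin N) (Fin N) ℂ}
    (hB : ∀ i j, Differentiable ℂ (fun u => B u i j)) (h : Fin N → ℂ) (k : Fin N) (u : Fin N → ℂ) :
    pdM B k u *ᵥ h = fun i => pd (fun v => (B v *ᵥ h) i) k u := by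
  funext i
  simp only [Matrix.mulVec, dotProduct, pd_sum_mul_const (fun μ _ => hB i μ)]
  rfl

theorem sum_apply_mul_comm_of_apply_single_symm {ι R : Type*} [Fintype ι] [DecidableEq ι]
    [CommSemiring R] {D : ι → (ι → R) →ₗ[R] R}
    (hD : ∀ j k, D k (Pi.single j 1) = D j (Pi.single k 1)) (x y : ι → R) :
    ∑ k, D k x * y k = ∑ k, D k y * x k := by
  have hexp : ∀ k z, D k z = ∑ j, z j * D k (Pi.single j 1) := fun k z => by
    conv_lhs => rw [pi_eq_sum_univ' z]
    simp
  simp only [hexp _ x, hexp _ y, Finset.sum_mul]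
  rw [Finset.sum_comm]
  refine Finset.sum_congr rfl fun k _ => Finset.sum_congr rfl fun j _ => ?_
  rw [hD]
  ring

theorem exists_pd_eq_of_pd_symm {N : ℕ} {f : Fin N → (Fin N → ℂ) → ℂ}
    (hf : ∀ k, Differentiable ℂ (f k)) (hsymm : ∀ μ ν u, pd (f μ) ν u = pd (f ν) μ u) :
    ∃ F : (Fin N → ℂ) → ℂ, ∀ j u, pd F j u = f j u := by
  let e : Fin N → (Fin N → ℂ) →L[ℂ] ℂ := ContinuousLinearMap.proj
  let ω : (Fin N → ℂ) → (Fin N → ℂ) →L[ℂ] ℂ := fun u => ∑ k, f k u • e k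
  have hω : ∀ u, HasFDerivAt ω (∑ k, (fderiv ℂ (f k) u).smulRight (e k)) u := fun u =>
    HasFDerivAt.fun_sum fun k _ => (hf k u).hasFDerivAt.smul_const (e k)
  have hclosed : ∀ u x y, fderiv ℝ ω u x y = fderiv ℝ ω u y x := fun u x y => by
    rw [(hω u).differentiableAt.fderiv_restrictScalars ℝ, (hω u).fderiv]
    simpa [e] using sum_apply_mul_comm_of_apply_single_symm
      (D := fun k => (fderiv ℂ (f k) u : (Fin N → ℂ) →ₗ[ℂ] ℂ)) (fun j k => hsymm k j u) x y
  obtain ⟨F, hF⟩ := convex_univ.exists_forall_hasFDerivAt_of_fderiv_symmetric isOpen_univ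
    (fun u _ => ((hω u).differentiableAt.restrictScalars ℝ).differentiableWithinAt)
    (fun u _ => hclosed u)
  refine ⟨F, fun j u => ?_⟩
  simp [pd, (hF u trivial).fderiv, ω, e, Pi.single_apply]

/-- If `B` solves the commutativity equations `[∂B/∂tⁱ, ∂B/∂tʲ] = 0` and the
primitive vector `h` is normalized so that `∂_k(Bh)ⁱ = δⁱ_k` (i.e. `B(t)h =
t + const`), then `∂B^i_μ/∂t^ν = ∂B^i_ν/∂t^μ`, and hence there exist
potentials `Fⁱ` with `B^i_j = ∂Fⁱ/∂tʲ`. -/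
theorem stmt17 {N : ℕ} (B : (Fin N → ℂ) → Matrix (Fin N) (Fin N) ℂ)
    (h : Fin N → ℂ)
    (hB : ∀ i j : Fin N, ContDiff ℂ ⊤ (fun u => B u i j))
    (hcomm : ∀ i j : Fin N, ∀ u,
      pdM B i u * pdM B j u = pdM B j u * pdM B i u)
    (hprim : ∀ u, ∀ i k : Fin N,
      pd (fun v => ∑ μ : Fin N, B v i μ * h μ) k u = if i = k then 1 else 0) :
    (∀ i μ ν : Fin N, ∀ u,
      pd (fun v => B v i μ) ν u = pd (fun v => B v i ν) μ u) ∧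
    ∃ F : Fin N → (Fin N → ℂ) → ℂ,
      ∀ i j : Fin N, ∀ u, B u i j = pd (F i) j u := by
  have hdiff : ∀ i j, Differentiable ℂ (fun u => B u i j) :=
    fun i j => (hB i j).differentiable (by simp)
  have hnormal : ∀ u k, pdM B k u *ᵥ h = Pi.single k 1 := fun u k => by
    rw [pdM_mulVec hdiff]
    funext i
    rw [Pi.single_apply]
    exact hprim u i k
  have hsymm : ∀ i μ ν u, pd (fun v => B v i μ) ν u = pd (fun v => B v i ν) μ u :=
    fun i μ ν u => Matrix.apply_eq_of_commute_of_mulVec_eq_single (hnormal u) (hcomm μ ν u) i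
  refine ⟨hsymm, ?_⟩
  choose F hF using fun i => exists_pd_eq_of_pd_symm (hdiff i) (hsymm i)
  exact ⟨F, fun i j u => (hF i j u).symm⟩
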